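/- arXiv:2402.08809 — 2 statements merged into one kernel-verified Lean document; each statement's English description precedes it below -/
import Mathlib

section
/- Let G = (V, E) be a finite directed graph without self-loops with |V| = n ≥ 2f+2 satisfying Condition A, and let (X_i)_{i∈V} be subsets of a set Y satisfying 2f-redundancy (Property C). Let F ⊆ V with |F| ≤ f and let Z : ℕ × F × V → P(Y) be an arbitrary function (the messages sent by faulty agents). For each i ∈ V \ F define recursively X_i^0 = X_i and X_i^{t+1} = { y ∈ X_i^t : |{ j ∈ N_i^- : y ∉ M_j^t(i) }| ≤ f }, where M_j^t(i) = X_j^t if j ∈ V \ F and M_j^t(i) = Z(t, j, i) if j ∈ F. Then for every i ∈ V \ F and every t ≥ n−2f, X_i^t = ⋂_{j∈V\F} X_j. -/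
/-- The set of incoming neighbors of `i` in the directed graph with edge
relation `E` (`E j i` means there is an edge from `j` to `i`). -/
def inNbr {ι : Type*} (E : ι → ι → Prop) (i : ι) : Set ι := {j | E j i}

/-- Condition A: for every partition of the vertex set into disjoint
nonempty `L`, nonempty `R`, and `F` with `|F| ≤ f`:
(a) if `|R| ≥ f + 1`, some `i ∈ L` has at least `f + 1` incoming neighbors in `R`;
(b) if `|L| ≥ f + 1`, some `i ∈ R` has at least `f + 1` incoming neighbors in `L`. -/
def ConditionA {ι : Type*} [Fintype ι] (E : ι → ι → Prop) (f : ℕ) : Prop :=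
  ∀ L R F : Set ι, L.Nonempty → R.Nonempty → F.ncard ≤ f →
    Disjoint L R → Disjoint L F → Disjoint R F → L ∪ R ∪ F = Set.univ →
    (f + 1 ≤ R.ncard → ∃ i ∈ L, f + 1 ≤ (inNbr E i ∩ R).ncard) ∧
    (f + 1 ≤ L.ncard → ∃ i ∈ R, f + 1 ≤ (inNbr E i ∩ L).ncard)

/-- Convergence of the constrained iterative decentralized set-intersection
algorithm on a graph satisfying Condition A, under `2f`-redundancy
(Property C): every non-faulty agent's local set equals the intersection of
the non-faulty agents' input sets after at most `n − 2f` iterations.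
Here `XS t i` is the local set of agent `i` at the start of iteration `t`,
and `Z t j i` is the arbitrary set that faulty agent `j` sends to `i` in
iteration `t`. -/
theorem iterative_algorithm_converges
    {ι Y : Type*} [Fintype ι] (f : ℕ) (E : ι → ι → Prop)
    (hirr : ∀ i, ¬ E i i)
    (hn : 2 * f + 2 ≤ Fintype.card ι)
    (hA : ConditionA E f)
    (X : ι → Set Y)
    (hC1 : (⋂ i, X i).Nonempty)
    (hC2 : ∀ y : Y, y ∉ ⋂ i, X i → 2 * f + 1 ≤ {i : ι | y ∉ X i}.ncard)
    (F : Set ι) (hF : F.ncard ≤ f)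
    (Z : ℕ → ι → ι → Set Y)
    (XS : ℕ → ι → Set Y)
    (hX0 : ∀ i ∉ F, XS 0 i = X i)
    (hXrec : ∀ t : ℕ, ∀ i ∉ F, XS (t + 1) i =
      {y ∈ XS t i |
        {j | E j i ∧ ((j ∉ F ∧ y ∉ XS t j) ∨ (j ∈ F ∧ y ∉ Z t j i))}.ncard ≤ f}) :
    ∀ i ∉ F, ∀ t : ℕ, Fintype.card ι - 2 * f ≤ t →
      XS t i = ⋂ j ∈ Fᶜ, X j := by
  classical
  have hmono : ∀ t : ℕ, ∀ i ∉ F, XS (t+1) i ⊆ XS t i := by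
    intro t i hi y hy
    rw [hXrec t i hi] at hy
    exact hy.1
  have hsafe : ∀ t : ℕ, ∀ i ∉ F, (⋂ j ∈ Fᶜ, X j) ⊆ XS t i := by
    intro t
    induction t with
    | zero =>
      intro i hi y hy
      rw [hX0 i hi]
      exact Set.mem_iInter₂.mp hy i hi
    | succ t ih =>
      intro i hi y hy
      rw [hXrec t i hi]
      refine ⟨ih i hi hy, ?_⟩
      have hsub : {j | E j i ∧ ((j ∉ F ∧ y ∉ XS t j) ∨ (j ∈ F ∧ y ∉ Z t j i))} ⊆ F := by
        intro j hj
        by_contra hjF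
        rcases hj.2 with ⟨h1, h2⟩ | ⟨h1, _⟩
        · exact h2 (ih j h1 hy)
        · exact hjF h1
      exact le_trans (Set.ncard_le_ncard hsub F.toFinite) hF
  intro i hiF t ht
  refine Set.Subset.antisymm ?_ (hsafe t i hiF)
  intro y hy
  by_contra hynot
  set B : ℕ → Set ι := fun s => {k | k ∉ F ∧ y ∉ XS s k} with hB
  have hBsubFc : ∀ s, B s ⊆ Fᶜ := fun s k hk => hk.1
  have hBmono : ∀ s, B s ⊆ B (s+1) := fun s k hk =>
    ⟨hk.1, fun h => hk.2 (hmono s k hk.1 h)⟩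
  have hyall : y ∉ ⋂ j, X j := by
    intro h
    exact hynot (Set.mem_iInter₂.mpr fun j _ => Set.mem_iInter.mp h j)
  have h0 : 2*f+1 ≤ (B 0).ncard + F.ncard := by
    have hsub : {k : ι | y ∉ X k} ⊆ B 0 ∪ F := by
      intro k hk
      by_cases hkF : k ∈ F
      · exact Or.inr hkF
      · exact Or.inl ⟨hkF, by rw [hX0 k hkF]; exact hk⟩
    calc 2*f+1 ≤ ({k : ι | y ∉ X k}).ncard := hC2 y hyall
      _ ≤ (B 0 ∪ F).ncard := Set.ncard_le_ncard hsub (Set.toFinite _)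
      _ ≤ (B 0).ncard + F.ncard := Set.ncard_union_le _ _
  have key : ∀ s : ℕ, B s = Fᶜ ∨ 2*f+1+s ≤ (B s).ncard + F.ncard := by
    intro s
    induction s with
    | zero => exact Or.inr (by simpa using h0)
    | succ s ih =>
      by_cases hfull : B s = Fᶜ
      · left
        apply Set.Subset.antisymm (hBsubFc _)
        rw [← hfull]; exact hBmono s
      · have h : 2*f+1+s ≤ (B s).ncard + F.ncard := by
          rcases ih with h | h
          · exact absurd h hfull
          · exact h
        right
        have hLne : (Fᶜ \ B s).Nonempty := by
          rcases Set.exists_of_ssubset (ssubset_of_subset_of_ne (hBsubFc s) hfull) with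
            ⟨k, hk1, hk2⟩
          exact ⟨k, hk1, hk2⟩
        have hRcard : f + 1 ≤ (B s).ncard := by omega
        have hRne : (B s).Nonempty := Set.nonempty_of_ncard_ne_zero (by omega)
        have hdLR : Disjoint (Fᶜ \ B s) (B s) := by
          rw [Set.disjoint_left]; exact fun k hk hk2 => hk.2 hk2
        have hdLF : Disjoint (Fᶜ \ B s) F := by
          rw [Set.disjoint_left]; exact fun k hk hk2 => hk.1 hk2
        have hdRF : Disjoint (B s) F := by
          rw [Set.disjoint_left]; exact fun k hk hk2 => hk.1 hk2
        have huniv : (Fᶜ \ B s) ∪ B s ∪ F = Set.univ := by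
          ext k
          simp only [Set.mem_union, Set.mem_diff, Set.mem_univ, iff_true,
            Set.mem_compl_iff]
          by_cases hk : k ∈ F
          · exact Or.inr hk
          · by_cases hk2 : k ∈ B s
            · exact Or.inl (Or.inr hk2)
            · exact Or.inl (Or.inl ⟨fun h => hk h, hk2⟩)
        obtain ⟨hpa, _⟩ := hA (Fᶜ \ B s) (B s) F hLne hRne hF hdLR hdLF hdRF huniv
        obtain ⟨j, hjL, hjnb⟩ := hpa hRcard
        have hjF : j ∉ F := hjL.1
        have hjout : y ∉ XS (s+1) j := by
          intro hyj
          rw [hXrec s j hjF] at hyj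
          have hsub2 : inNbr E j ∩ B s ⊆
              {k | E k j ∧ ((k ∉ F ∧ y ∉ XS s k) ∨ (k ∈ F ∧ y ∉ Z s k j))} := by
            intro k hk
            exact ⟨hk.1, Or.inl ⟨hk.2.1, hk.2.2⟩⟩
          have hle2 := Set.ncard_le_ncard hsub2 (Set.toFinite _)
          have := hyj.2
          omega
        have hins : insert j (B s) ⊆ B (s+1) := by
          intro k hk
          rcases hk with rfl | hk
          · exact ⟨hjF, hjout⟩
          · exact hBmono s hk
        have hjnotin : j ∉ B s := hjL.2
        have h1 := Set.ncard_insert_of_notMem hjnotin (Set.toFinite _)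
        have h2 := Set.ncard_le_ncard hins (Set.toFinite _)
        omega
  have hfin : B t = Fᶜ := by
    rcases key t with h | h
    · exact h
    · exfalso
      have hle : (B t).ncard ≤ (Fᶜ : Set ι).ncard :=
        Set.ncard_le_ncard (hBsubFc t) (Set.toFinite _)
      have hcompl : F.ncard + (Fᶜ : Set ι).ncard = Fintype.card ι := by
        rw [Set.ncard_add_ncard_compl, Nat.card_eq_fintype_card]
      omega
  have hiB : i ∈ B t := by rw [hfin]; exact hiF
  exact hiB.2 hy
end

section
/- Let G = (V, E) be a finite directed graph without self-loops, f ∈ ℕ, and let (X_i)_{i∈V} be subsets of a set Y satisfying (f,G)-redundancy (Property D). Let F ⊆ V with |F| ≤ f and let Z : ℕ × F × V → P(Y) be an arbitrary function (the messages sent by faulty agents). For each i ∈ V \ F define recursively X_i^0 = X_i and X_i^{t+1} = { y ∈ X_i^t : |{ j ∈ N_i^- : y ∉ M_j^t(i) }| ≤ f }, where M_j^t(i) = X_j^t if j ∈ V \ F and M_j^t(i) = Z(t, j, i) if j ∈ F. Then for every i ∈ V \ F there exists T ∈ ℕ such that for all t ≥ T, X_i^t = ⋂_{j∈V\F} X_j.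 -/
/-- `E'` is (the edge relation of) a reduced graph of the graph `E` with
respect to the faulty set `F`: all edges incident on `F` are removed, and at
each remaining node at most `f` further incoming edges are removed. -/
def IsReducedGraph {ι : Type*} (E : ι → ι → Prop) (f : ℕ) (F : Set ι)
    (E' : ι → ι → Prop) : Prop :=
  (∀ i j, E' i j → E i j) ∧
  (∀ i j, E' i j → i ∉ F ∧ j ∉ F) ∧
  (∀ i, i ∉ F → {j | j ∉ F ∧ E j i ∧ ¬ E' j i}.ncard ≤ f)

/-- `S` is a source component of the directed graph with vertex set `W` and
edge relation `E'`: a (nonempty, maximal) strongly connected component such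
that no edge enters `S` from outside `S`. -/
def IsSourceComponent {ι : Type*} (W : Set ι) (E' : ι → ι → Prop)
    (S : Set ι) : Prop :=
  S.Nonempty ∧ S ⊆ W ∧
  (∀ i ∈ S, ∀ j ∈ S, Relation.ReflTransGen E' i j) ∧
  (∀ j ∈ W, ∀ i ∈ S, Relation.ReflTransGen E' i j →
    Relation.ReflTransGen E' j i → j ∈ S) ∧
  (∀ j i, i ∈ S → E' j i → j ∈ S)

/-- `(f, G)`-redundancy (Property D) for a family of sets `X i`: for every
`F` with `|F| ≤ f`, every reduced graph `G_F`, every source component `S`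
of `G_F`, and every point `y ∉ ⋂ i ∉ F, X i`, some `j ∈ S` has `y ∉ X j`. -/
def FGRedundancy {ι Y : Type*} [Fintype ι] (E : ι → ι → Prop) (f : ℕ)
    (X : ι → Set Y) : Prop :=
  ∀ F : Set ι, F.ncard ≤ f →
    ∀ E' : ι → ι → Prop, IsReducedGraph E f F E' →
      ∀ S : Set ι, IsSourceComponent ((Set.univ : Set ι) \ F) E' S →
        ∀ y : Y, y ∉ ⋂ i ∈ Fᶜ, X i → ∃ j ∈ S, y ∉ X j


/-- In a finite graph, every vertex is reachable from a vertex `k` that is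
"minimal" for reachability: anything reaching `k` is reached back by `k`. -/
lemma exists_min_reach_aux {ι : Type*} [Fintype ι] (E' : ι → ι → Prop) :
    ∀ (n : ℕ) (i : ι),
      ({j | Relation.ReflTransGen E' j i ∧ ¬ Relation.ReflTransGen E' i j}).ncard ≤ n →
      ∃ k, Relation.ReflTransGen E' k i ∧
        ∀ j, Relation.ReflTransGen E' j k → Relation.ReflTransGen E' k j := by
  intro n
  induction n with
  | zero =>
    intro i h
    refine ⟨i, .refl, fun j hji => ?_⟩
    by_contra hij
    have hmem : j ∈ {j | Relation.ReflTransGen E' j i ∧ ¬ Relation.ReflTransGen E' i j} :=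
      ⟨hji, hij⟩
    rw [(Set.ncard_eq_zero (Set.toFinite _)).mp (Nat.le_zero.mp h)] at hmem
    exact hmem
  | succ n ih =>
    intro i h
    rcases Set.eq_empty_or_nonempty
        {j | Relation.ReflTransGen E' j i ∧ ¬ Relation.ReflTransGen E' i j} with he | hne
    · exact ih i (by rw [he]; simp)
    · obtain ⟨a, hai, hia⟩ := hne
      have hsub : {j | Relation.ReflTransGen E' j a ∧ ¬ Relation.ReflTransGen E' a j} ⊆
          {j | Relation.ReflTransGen E' j i ∧ ¬ Relation.ReflTransGen E' i j} := by
        rintro j ⟨hja, haj⟩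
        exact ⟨hja.trans hai, fun hij => hia (hij.trans hja)⟩
      have hlt : ({j | Relation.ReflTransGen E' j a ∧ ¬ Relation.ReflTransGen E' a j}).ncard <
          ({j | Relation.ReflTransGen E' j i ∧ ¬ Relation.ReflTransGen E' i j}).ncard :=
        Set.ncard_lt_ncard ⟨hsub, fun hcon => (hcon ⟨hai, hia⟩).2 .refl⟩ (Set.toFinite _)
      obtain ⟨k, hka, hk⟩ := ih a (by omega)
      exact ⟨k, hka.trans hai, hk⟩

lemma exists_min_reach {ι : Type*} [Fintype ι] (E' : ι → ι → Prop) (i : ι) :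
    ∃ k, Relation.ReflTransGen E' k i ∧
      ∀ j, Relation.ReflTransGen E' j k → Relation.ReflTransGen E' k j :=
  exists_min_reach_aux E' _ i le_rfl

/-- Every non-faulty vertex of a reduced graph is reachable from some source
component. -/
lemma exists_source_component {ι : Type*} [Fintype ι] (E' : ι → ι → Prop) (F : Set ι)
    (hE' : ∀ i j, E' i j → i ∉ F ∧ j ∉ F) (i : ι) (hi : i ∉ F) :
    ∃ S, IsSourceComponent ((Set.univ : Set ι) \ F) E' S ∧
      ∃ k ∈ S, Relation.ReflTransGen E' k i := by
  obtain ⟨k, hki, hmin⟩ := exists_min_reach E' i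
  have hkF : k ∉ F := by
    rcases hki.cases_head with h | ⟨m, hkm, -⟩
    · exact h ▸ hi
    · exact (hE' _ _ hkm).1
  refine ⟨{j | j ∉ F ∧ Relation.ReflTransGen E' j k ∧ Relation.ReflTransGen E' k j},
      ⟨⟨k, hkF, .refl, .refl⟩, ?_, ?_, ?_, ?_⟩, k, ⟨hkF, .refl, .refl⟩, hki⟩
  · rintro j ⟨hj, -, -⟩; exact ⟨Set.mem_univ _, hj⟩
  · rintro a ⟨-, hak, hka⟩ b ⟨-, hbk, hkb⟩; exact hak.trans hkb
  · rintro j hj a ⟨-, hak, hka⟩ haj hja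
    exact ⟨hj.2, hja.trans hak, hka.trans haj⟩
  · rintro j a ⟨-, hak, -⟩ hja
    have hjk : Relation.ReflTransGen E' j k := (Relation.ReflTransGen.single hja).trans hak
    exact ⟨(hE' _ _ hja).1, hjk, hmin _ hjk⟩

/-- Convergence of the constrained iterative decentralized set-intersection
algorithm under `(f, G)`-redundancy (Property D): every non-faulty agent's
local set eventually equals the intersection of the non-faulty agents' input
sets. Here `XS t i` is the local set of agent `i` at the start of iteration
`t`, and `Z t j i` is the arbitrary set that faulty agent `j` sends to `i`
in iteration `t`. -/
theorem iterative_algorithm_converges_of_fg_redundancy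
    {ι Y : Type*} [Fintype ι] (f : ℕ) (E : ι → ι → Prop)
    (hirr : ∀ i, ¬ E i i)
    (X : ι → Set Y)
    (hD : FGRedundancy E f X)
    (F : Set ι) (hF : F.ncard ≤ f)
    (Z : ℕ → ι → ι → Set Y)
    (XS : ℕ → ι → Set Y)
    (hX0 : ∀ i ∉ F, XS 0 i = X i)
    (hXrec : ∀ t : ℕ, ∀ i ∉ F, XS (t + 1) i =
      {y ∈ XS t i |
        {j | E j i ∧ ((j ∉ F ∧ y ∉ XS t j) ∨ (j ∈ F ∧ y ∉ Z t j i))}.ncard ≤ f}) :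
    ∀ i ∉ F, ∃ T : ℕ, ∀ t : ℕ, T ≤ t → XS t i = ⋂ j ∈ Fᶜ, X j := by
  intro i hi
  set n := Fintype.card ι with hn
  -- monotonicity of local sets
  have hmono : ∀ t, ∀ j ∉ F, XS (t + 1) j ⊆ XS t j := by
    intro t j hj
    rw [hXrec t j hj]
    exact fun y hy => hy.1
  have hmono' : ∀ s t, s ≤ t → ∀ j ∉ F, XS t j ⊆ XS s j := by
    intro s t hst
    induction t, hst using Nat.le_induction with
    | base => exact fun j hj => subset_rfl
    | succ t hst ih => exact fun j hj => (hmono t j hj).trans (ih j hj)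
  -- lower bound: the intersection is never removed
  have hlow : ∀ t, ∀ j ∉ F, (⋂ m ∈ Fᶜ, X m) ⊆ XS t j := by
    intro t
    induction t with
    | zero =>
      intro j hj
      rw [hX0 j hj]
      exact Set.biInter_subset_of_mem hj
    | succ t ih =>
      intro j hj y hy
      rw [hXrec t j hj]
      refine ⟨ih j hj hy, ?_⟩
      have hsub : {m | E m j ∧ ((m ∉ F ∧ y ∉ XS t m) ∨ (m ∈ F ∧ y ∉ Z t m j))} ⊆ F := by
        rintro m ⟨-, h | h⟩
        · exact absurd (ih m h.1 hy) h.2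
        · exact h.1
      exact le_trans (Set.ncard_le_ncard hsub F.toFinite) hF
  -- key step: survivors of a point outside the intersection strictly decrease
  have hstep : ∀ y, y ∉ (⋂ m ∈ Fᶜ, X m) → ∀ t,
      ({m | m ∉ F ∧ y ∈ XS t m}).Nonempty →
      ({m | m ∉ F ∧ y ∈ XS (t + 1) m}).ncard < ({m | m ∉ F ∧ y ∈ XS t m}).ncard := by
    intro y hy t hne
    set A : Set ι := {m | m ∉ F ∧ y ∈ XS t m} with hA
    set A' : Set ι := {m | m ∉ F ∧ y ∈ XS (t + 1) m} with hA'
    have hsub : A' ⊆ A := fun m hm => ⟨hm.1, hmono t m hm.1 hm.2⟩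
    refine Set.ncard_lt_ncard ⟨hsub, fun hcon => ?_⟩ A.toFinite
    obtain ⟨i₀, hi₀⟩ := hne
    -- the reduced graph at time t for point y
    set E' : ι → ι → Prop :=
      fun j m => j ∉ F ∧ m ∉ F ∧ E j m ∧ (m ∈ A' → y ∈ XS t j) with hE'def
    have hred : IsReducedGraph E f F E' := by
      refine ⟨fun a b h => h.2.2.1, fun a b h => ⟨h.1, h.2.1⟩, ?_⟩
      intro m hm
      by_cases hmA : m ∈ A'
      · have hyA : y ∈ XS (t + 1) m := hmA.2
        rw [hXrec t m hm] at hyA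
        have hsub2 : {j | j ∉ F ∧ E j m ∧ ¬ E' j m} ⊆
            {j | E j m ∧ ((j ∉ F ∧ y ∉ XS t j) ∨ (j ∈ F ∧ y ∉ Z t j m))} := by
          rintro j ⟨hjF, hjE, hjn⟩
          exact ⟨hjE, Or.inl ⟨hjF, fun hyj => hjn ⟨hjF, hm, hjE, fun _ => hyj⟩⟩⟩
        exact le_trans (Set.ncard_le_ncard hsub2 (Set.toFinite _)) hyA.2
      · have he : {j | j ∉ F ∧ E j m ∧ ¬ E' j m} = ∅ := by
          ext j
          simp only [Set.mem_setOf_eq, Set.mem_empty_iff_false, iff_false]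
          rintro ⟨hjF, hjE, hjn⟩
          exact hjn ⟨hjF, hm, hjE, fun h => absurd h hmA⟩
        simp [he]
    -- A' is closed under E'-predecessors
    have hsingle : ∀ a b, E' a b → b ∈ A' → a ∈ A' := by
      intro a b hab hb
      exact hcon ⟨hab.1, hab.2.2.2 hb⟩
    have hclosed : ∀ j m, Relation.ReflTransGen E' j m → m ∈ A' → j ∈ A' := by
      intro j m h hm
      induction h using Relation.ReflTransGen.head_induction_on with
      | refl => exact hm
      | head hab _ ih => exact hsingle _ _ hab ih
    obtain ⟨S, hS, k, hkS, hki⟩ :=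
      exists_source_component E' F (fun a b h => ⟨h.1, h.2.1⟩) i₀ hi₀.1
    obtain ⟨j, hjS, hjX⟩ := hD F hF E' hred S hS y hy
    have hjk : Relation.ReflTransGen E' j k := hS.2.2.1 j hjS k hkS
    have hjA : j ∈ A' := hclosed j i₀ (hjk.trans hki) (hcon hi₀)
    have : y ∈ X j := by
      rw [← hX0 j hjA.1]
      exact hmono' 0 (t + 1) (Nat.zero_le _) j hjA.1 hjA.2
    exact hjX this
  -- after n iterations, every point outside the intersection is eliminated
  have hempty : ∀ y, y ∉ (⋂ m ∈ Fᶜ, X m) → ∀ t, n ≤ t →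
      {m | m ∉ F ∧ y ∈ XS t m} = ∅ := by
    intro y hy
    have key : ∀ t, {m | m ∉ F ∧ y ∈ XS t m} = ∅ ∨
        ({m | m ∉ F ∧ y ∈ XS t m}).ncard + t ≤ n := by
      intro t
      induction t with
      | zero =>
        right
        have := Set.ncard_le_ncard (Set.subset_univ {m | m ∉ F ∧ y ∈ XS 0 m}) Set.finite_univ
        rw [Set.ncard_univ, Nat.card_eq_fintype_card] at this
        omega
      | succ t ih =>
        have hsub : {m | m ∉ F ∧ y ∈ XS (t + 1) m} ⊆ {m | m ∉ F ∧ y ∈ XS t m} :=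
          fun m hm => ⟨hm.1, hmono t m hm.1 hm.2⟩
        rcases ih with he | hle
        · exact Or.inl (Set.subset_eq_empty hsub he)
        · rcases Set.eq_empty_or_nonempty {m | m ∉ F ∧ y ∈ XS t m} with he | hne
          · exact Or.inl (Set.subset_eq_empty hsub he)
          · have := hstep y hy t hne
            omega
    intro t ht
    rcases key t with he | hle
    · exact he
    · exact (Set.ncard_eq_zero (Set.toFinite _)).mp (by omega)
  refine ⟨n, fun t ht => Set.Subset.antisymm ?_ (hlow t i hi)⟩
  intro y hyt
  by_contra hy
  have hmem : i ∈ ({m | m ∉ F ∧ y ∈ XS t m} : Set ι) := ⟨hi, hyt⟩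
  rw [hempty y hy t ht] at hmem
  exact hmem
end
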